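/- (gen preserves types.) For every ground type τ and every term t with t : τ, the generalised term gen_τ(t) again satisfies gen_τ(t) : τ (for any choice of fresh variables used in computing gen_τ(t)). -/

import Mathlib

/-- First-order terms over countably infinite sets of variables (ℕ)
and function symbols (ℕ). -/
inductive Term : Type where
  | var : ℕ → Term
  | app : ℕ → List Term → Term

namespace Term

/-- Applying a substitution (a mapping from variables to terms) homomorphically. -/
def subst (θ : ℕ → Term) : Term → Term
  | var v => θ v
  | app f ts => app f (ts.attach.map (fun x => x.1.subst θ))
decreasing_by
  have := List.sizeOf_lt_of_mem x.2
  simp only [Term.app.sizeOf_spec]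
  omega

/-- A term is ground if it contains no variables. -/
inductive Ground : Term → Prop where
  | app : ∀ f ts, (∀ t ∈ ts, Ground t) → Ground (app f ts)

/-- The variable `v` occurs in the term. -/
inductive Occurs (v : ℕ) : Term → Prop where
  | var : Occurs v (var v)
  | app : ∀ f ts t, t ∈ ts → Occurs v t → Occurs v (app f ts)

/-- `s` is an instance of `t` if `s = tθ` for some substitution `θ`. -/
def IsInstanceOf (s t : Term) : Prop := ∃ θ : ℕ → Term, t.subst θ = s

/-- Two terms are variants if each is an instance of the other. -/
def Variant (s t : Term) : Prop := s.IsInstanceOf t ∧ t.IsInstanceOf s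

end Term

/-- Types: type variables, the distinguished 0-ary constructors
`static`, `dynamic`, `nonvar`, and other constructors applied to types. -/
inductive Ty : Type where
  | var : ℕ → Ty
  | static : Ty
  | dynamic : Ty
  | nonvar : Ty
  | con : ℕ → List Ty → Ty

namespace Ty

/-- Applying a type substitution. -/
def subst (σ : ℕ → Ty) : Ty → Ty
  | var v => σ v
  | static => static
  | dynamic => dynamic
  | nonvar => nonvar
  | con c args => con c (args.attach.map (fun x => x.1.subst σ))
decreasing_by
  have := List.sizeOf_lt_of_mem x.2
  simp only [Ty.con.sizeOf_spec]
  omega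

/-- A type is ground if it contains no type variables. -/
inductive Ground : Ty → Prop where
  | static : Ground static
  | dynamic : Ground dynamic
  | nonvar : Ground nonvar
  | con : ∀ c args, (∀ τ ∈ args, Ground τ) → Ground (con c args)

/-- All type variables of the type are below `n`. -/
inductive VarsBelow (n : ℕ) : Ty → Prop where
  | var : ∀ v, v < n → VarsBelow n (var v)
  | static : VarsBelow n static
  | dynamic : VarsBelow n dynamic
  | nonvar : VarsBelow n nonvar
  | con : ∀ c args, (∀ τ ∈ args, VarsBelow n τ) → VarsBelow n (con c args)

end Ty

/-- A type definition `c(V₁,…,Vₙ) → f₁(T₁¹,…) ; … ; f_k(T_k¹,…)` for an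
`n`-ary type constructor: the variables are represented by `0,…,arity-1`,
the alternatives are pairs of a function symbol and the list of argument types;
the function symbols are distinct and the argument types only use
variables among `0,…,arity-1`. -/
structure TypeDef where
  arity : ℕ
  alts : List (ℕ × List Ty)
  alts_nonempty : alts ≠ []
  alts_nodup : (alts.map Prod.fst).Nodup
  vars_bound : ∀ p ∈ alts, ∀ τ ∈ p.2, Ty.VarsBelow arity τ

/-- A type system: exactly one type definition for every type constructor
other than `static`, `dynamic` and `nonvar`. -/
structure TypeSystem where
  defs : ℕ → TypeDef

mutual
/-- The type judgement `t : τ` relative to the type system `Γ`. -/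
inductive HasType (Γ : TypeSystem) : Term → Ty → Prop where
  | dyn (t : Term) : HasType Γ t .dynamic
  | stat (t : Term) : t.Ground → HasType Γ t .static
  | nv (f : ℕ) (ts : List Term) : HasType Γ (.app f ts) .nonvar
  | con (c : ℕ) (σ : ℕ → Ty) (f : ℕ) (Ts : List Ty) (ts : List Term)
      (hσ : ∀ v, (σ v).Ground)
      (hmem : (f, Ts) ∈ (Γ.defs c).alts)
      (hargs : HasTypeArgs Γ ts (Ts.map (Ty.subst σ))) :
      HasType Γ (.app f ts) (.con c ((List.range (Γ.defs c).arity).map σ))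

/-- `HasTypeArgs Γ ts τs` : the terms `ts` pointwise have the types `τs`. -/
inductive HasTypeArgs (Γ : TypeSystem) : List Term → List Ty → Prop where
  | nil : HasTypeArgs Γ [] []
  | cons {t τ ts τs} : HasType Γ t τ → HasTypeArgs Γ ts τs →
      HasTypeArgs Γ (t :: ts) (τ :: τs)
end

/-- Atoms `p(t₁,…,tₙ)` over a countably infinite set of predicate symbols (ℕ). -/
structure Atom where
  pred : ℕ
  args : List Term

namespace Atom

/-- Substitutions apply to atoms argumentwise. -/
def subst (θ : ℕ → Term) (A : Atom) : Atom := ⟨A.pred, A.args.map (Term.subst θ)⟩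

/-- `B` is an instance of `A`. -/
def IsInstanceOf (B A : Atom) : Prop := ∃ θ : ℕ → Term, A.subst θ = B

/-- Two atoms are variants if each is an instance of the other. -/
def Variant (A B : Atom) : Prop := A.IsInstanceOf B ∧ B.IsInstanceOf A

end Atom

/-- A division: a set of expressions `p(τ₁,…,τₙ)` (represented as pairs of a
predicate symbol and a list of types), with all types ground and at most one
division per predicate. -/
def IsDivision (Δ : Set (ℕ × List Ty)) : Prop :=
  (∀ d ∈ Δ, ∀ τ ∈ d.2, τ.Ground) ∧
  (∀ d ∈ Δ, ∀ d' ∈ Δ, d.1 = d'.1 → d = d')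

/-- An atom `p(t₁,…,tₙ)` is safe wrt `Δ` iff there is `p(τ₁,…,τₙ) ∈ Δ`
with `tᵢ : τᵢ` for all `i`. -/
def SafeAtom (Γ : TypeSystem) (Δ : Set (ℕ × List Ty)) (A : Atom) : Prop :=
  ∃ τs : List Ty, (A.pred, τs) ∈ Δ ∧ HasTypeArgs Γ A.args τs

mutual
/-- `Gen Γ τ t s L`: `s` is a result of the partial generalisation mapping
`gen_τ(t)`, where `L` records (in order) the fresh variables chosen. -/
inductive Gen (Γ : TypeSystem) : Ty → Term → Term → List ℕ → Prop where
  | static (t : Term) : Gen Γ .static t t []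
  | dynamic (t : Term) (v : ℕ) : Gen Γ .dynamic t (.var v) [v]
  | nonvar (f : ℕ) (ts : List Term) (vs : List ℕ) (h : vs.length = ts.length) :
      Gen Γ .nonvar (.app f ts) (.app f (vs.map Term.var)) vs
  | con (c : ℕ) (σ : ℕ → Ty) (f : ℕ) (Ts : List Ty) (ts ss : List Term) (L : List ℕ)
      (hσ : ∀ v, (σ v).Ground)
      (hmem : (f, Ts) ∈ (Γ.defs c).alts)
      (hargs : GenArgs Γ (Ts.map (Ty.subst σ)) ts ss L) :
      Gen Γ (.con c ((List.range (Γ.defs c).arity).map σ)) (.app f ts) (.app f ss) L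

/-- Pointwise generalisation of a list of terms, collecting the fresh variables. -/
inductive GenArgs (Γ : TypeSystem) : List Ty → List Term → List Term → List ℕ → Prop where
  | nil : GenArgs Γ [] [] [] []
  | cons {τ t s L τs ts ss Ls} : Gen Γ τ t s L → GenArgs Γ τs ts ss Ls →
      GenArgs Γ (τ :: τs) (t :: ts) (s :: ss) (L ++ Ls)
end

/-- `GenAtom Γ Δ A B L`: `B` is a result of `gen_Δ(A)` with fresh variables `L`. -/
def GenAtom (Γ : TypeSystem) (Δ : Set (ℕ × List Ty)) (A B : Atom) (L : List ℕ) : Prop :=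
  B.pred = A.pred ∧
  ∃ τs : List Ty, (A.pred, τs) ∈ Δ ∧ HasTypeArgs Γ A.args τs ∧
    GenArgs Γ τs A.args B.args L

/-! Induction on the derivation of `gen_τ(t)`; only a constructed type `c(τ')` needs an argument.
Since the function symbols of a type definition are distinct, the head symbol `f` of `t`
selects the same alternative `f(T₁,…,Tₙ)` in the typing of `t` as in the generalisation, and since
the `Tᵢ` only mention the parameters of `c`, the two ground instances of that alternative coincide.
Hence the arguments of `t` have exactly the types along which they are generalised. -/

@[simp]
lemma Ty.subst_con (σ : ℕ → Ty) (c : ℕ) (args : List Ty) :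
    (Ty.con c args).subst σ = .con c (args.map (Ty.subst σ)) := by
  rw [Ty.subst, List.attach_map_val]

lemma Ty.VarsBelow.subst_congr {n : ℕ} {τ : Ty} {σ σ' : ℕ → Ty} (h : τ.VarsBelow n)
    (hσ : ∀ v < n, σ v = σ' v) : τ.subst σ = τ.subst σ' := by
  induction h with
  | var v hv => simp only [Ty.subst, hσ v hv]
  | static | dynamic | nonvar => simp only [Ty.subst]
  | con c args _ ih => simpa only [Ty.subst_con] using congrArg (Ty.con c) (List.map_congr_left ih)

lemma TypeDef.eq_of_mem_alts (d : TypeDef) {f : ℕ} {Ts Ts' : List Ty}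
    (h : (f, Ts) ∈ d.alts) (h' : (f, Ts') ∈ d.alts) : Ts = Ts' :=
  congrArg Prod.snd (List.inj_on_of_nodup_map d.alts_nodup h h' rfl)

lemma TypeDef.subst_alt_congr (d : TypeDef) {f : ℕ} {Ts : List Ty} (h : (f, Ts) ∈ d.alts)
    {σ σ' : ℕ → Ty} (hσ : (List.range d.arity).map σ = (List.range d.arity).map σ') :
    Ts.map (Ty.subst σ) = Ts.map (Ty.subst σ') :=
  List.map_congr_left fun τ hτ => (d.vars_bound _ h τ hτ).subst_congr fun v hv =>
    List.map_inj_left.mp hσ v (List.mem_range.mpr hv)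

lemma HasType.args_of_app_con {Γ : TypeSystem} {c f : ℕ} {σ : ℕ → Ty} {Ts : List Ty}
    {ts : List Term} {args : List Ty} (hmem : (f, Ts) ∈ (Γ.defs c).alts)
    (h : HasType Γ (.app f ts) (.con c args))
    (hσ : args = (List.range (Γ.defs c).arity).map σ) :
    HasTypeArgs Γ ts (Ts.map (Ty.subst σ)) := by
  cases h with
  | con _ σ' _ Ts' _ _ hmem' hargs' =>
    rwa [← (Γ.defs c).eq_of_mem_alts hmem hmem', (Γ.defs c).subst_alt_congr hmem hσ]
      at hargs'

mutual

theorem Gen.hasType {Γ : TypeSystem} {τ : Ty} {t s : Term} {L : List ℕ} :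
    Gen Γ τ t s L → HasType Γ t τ → HasType Γ s τ
  | .static _, ht => ht
  | .dynamic _ _, _ => .dyn _
  | .nonvar f _ vs _, _ => .nv f (vs.map Term.var)
  | .con c σ f Ts _ _ _ hσ hmem hargs, ht =>
      .con c σ f Ts _ hσ hmem (hargs.hasTypeArgs (ht.args_of_app_con hmem rfl))

theorem GenArgs.hasTypeArgs {Γ : TypeSystem} {τs : List Ty} {ts ss : List Term} {L : List ℕ} :
    GenArgs Γ τs ts ss L → HasTypeArgs Γ ts τs → HasTypeArgs Γ ss τs
  | .nil, _ => .nil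
  | .cons hgen hgens, .cons ht hts => .cons (hgen.hasType ht) (hgens.hasTypeArgs hts)

end

/-- **gen preserves types.** For every ground type `τ` and every term `t` with
`t : τ`, the generalised term `gen_τ(t)` again satisfies `gen_τ(t) : τ`
(for any choice of fresh variables used in computing `gen_τ(t)`). -/
theorem gen_preserves_type (Γ : TypeSystem) (τ : Ty) (t : Term) (hτ : τ.Ground)
    (ht : HasType Γ t τ) (s : Term) (L : List ℕ) (hgen : Gen Γ τ t s L) :
    HasType Γ s τ :=
  hgen.hasType ht
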